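/- arXiv:1111.0897 — 4 statements merged into one kernel-verified Lean document; each statement's English description precedes it below -/
import Mathlib

section
/- Let m ≥ d ≥ 1 and let g : [0,1] → {0,1} be a union of at most m intervals. Then there exists a function h : [0,1] → {0,1} that is a union of at most d intervals such that the Lebesgue measure of {x ∈ [0,1] : g(x) ≠ h(x)} is at most (m − d)/m. -/
/-!
Disjointify the intervals `I₁, …, Iₘ` into the pieces `Pᵢ = Iᵢ \ ⋃_{j<i} Iⱼ`, whose measures sum
to at most `1`, and keep the `d` intervals whose pieces are largest. A point covered by `g` but not
by `h` lies in the piece of a dropped interval, and the `m - d` smallest of `m` nonnegative numbers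
of sum at most `1` sum to at most `(m - d)/m`.
-/

open MeasureTheory Set

/-- `f : [0,1] → {0,1}` is a union of at most `d` intervals: its `1`-set within `[0,1]`
is a union of at most `d` (closed) intervals. -/
def IsUnionOfIntervals (d : ℕ) (f : ℝ → Bool) : Prop :=
  ∃ l u : Fin d → ℝ, ∀ x ∈ Set.Icc (0:ℝ) 1,
    (f x = true ↔ ∃ i, x ∈ Set.Icc (l i) (u i))

open scoped ENNReal

theorem Finset.exists_subset_card_eq_card_nsmul_sum_le {ι M : Type*} [AddCommMonoid M]
    [LinearOrder M] [IsOrderedAddMonoid M] (f : ι → M) (s : Finset ι) {k : ℕ}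
    (hk : k ≤ s.card) :
    ∃ t ⊆ s, t.card = k ∧ s.card • ∑ i ∈ t, f i ≤ k • ∑ i ∈ s, f i := by
  classical
  induction s using Finset.induction_on_max_value f generalizing k with
  | empty => exact ⟨∅, subset_rfl, (Nat.le_zero.1 hk).symm, by simp⟩
  | insert a s ha hmax ih =>
    rw [Finset.card_insert_of_notMem ha] at hk ⊢
    rcases hk.eq_or_lt with rfl | hk
    · exact ⟨insert a s, subset_rfl, Finset.card_insert_of_notMem ha, le_rfl⟩
    obtain ⟨t, hts, rfl, ht⟩ := ih (Nat.le_of_lt_succ hk)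
    have hta : ∑ i ∈ t, f i ≤ t.card • f a :=
      Finset.sum_le_card_nsmul t f (f a) fun x hx => hmax x (hts hx)
    refine ⟨t, hts.trans (Finset.subset_insert a s), rfl, ?_⟩
    calc (s.card + 1) • ∑ i ∈ t, f i = s.card • ∑ i ∈ t, f i + ∑ i ∈ t, f i := succ_nsmul _ _
      _ ≤ t.card • ∑ i ∈ s, f i + t.card • f a := add_le_add ht hta
      _ = t.card • ∑ i ∈ insert a s, f i := by rw [Finset.sum_insert ha, nsmul_add, add_comm]

theorem Set.iUnion_diff_biUnion_subset_biUnion_disjointed {α ι : Type*} [PartialOrder ι]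
    [LocallyFiniteOrderBot ι] (f : ι → Set α) (D : Set ι) :
    (⋃ i, f i) \ ⋃ i ∉ D, f i ⊆ ⋃ i ∈ D, disjointed f i := by
  rintro x ⟨hx, hxD⟩
  rw [← iUnion_disjointed] at hx
  obtain ⟨i, hi⟩ := mem_iUnion.1 hx
  exact mem_biUnion (by_contra fun hiD => hxD (mem_biUnion hiD (disjointed_subset f i hi))) hi

theorem MeasureTheory.sum_measure_disjointed {α ι : Type*} [MeasurableSpace α] (μ : Measure α)
    [Fintype ι] [LinearOrder ι] [LocallyFiniteOrderBot ι] {f : ι → Set α}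
    (hf : ∀ i, MeasurableSet (f i)) :
    ∑ i, μ (disjointed f i) = μ (⋃ i, f i) := by
  rw [← iUnion_disjointed (f := f), measure_iUnion (disjoint_disjointed f)
    (fun i => disjointedRec (fun _ j ht => ht.diff (hf j)) (hf i)), tsum_fintype]

theorem MeasureTheory.exists_card_eq_card_nsmul_measure_iUnion_diff_le {α ι : Type*}
    [MeasurableSpace α] (μ : Measure α) [Fintype ι] [LinearOrder ι] [LocallyFiniteOrderBot ι]
    {f : ι → Set α} (hf : ∀ i, MeasurableSet (f i)) {d : ℕ} (hd : d ≤ Fintype.card ι) :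
    ∃ K : Finset ι, K.card = d ∧
      Fintype.card ι • μ ((⋃ i, f i) \ ⋃ i ∈ K, f i) ≤ (Fintype.card ι - d) • μ (⋃ i, f i) := by
  classical
  obtain ⟨D, -, hD, hsum⟩ := Finset.univ.exists_subset_card_eq_card_nsmul_sum_le
    (fun i => μ (disjointed f i)) (k := Fintype.card ι - d) (by simp)
  refine ⟨Dᶜ, by rw [Finset.card_compl, hD]; omega, ?_⟩
  have hsub : (⋃ i, f i) \ ⋃ i ∈ Dᶜ, f i ⊆ ⋃ i ∈ (D : Set ι), disjointed f i := by
    simpa using Set.iUnion_diff_biUnion_subset_biUnion_disjointed f D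
  calc Fintype.card ι • μ ((⋃ i, f i) \ ⋃ i ∈ Dᶜ, f i)
      ≤ Fintype.card ι • ∑ i ∈ D, μ (disjointed f i) :=
        nsmul_le_nsmul_right ((measure_mono hsub).trans (measure_biUnion_finset_le D _)) _
    _ ≤ (Fintype.card ι - d) • ∑ i, μ (disjointed f i) := by simpa [hD] using hsum
    _ = (Fintype.card ι - d) • μ (⋃ i, f i) := by rw [sum_measure_disjointed μ hf]

theorem isUnionOfIntervals_of_finset {ι : Type*} (l u : ι → ℝ) (K : Finset ι) {f : ℝ → Bool}
    (hf : ∀ x ∈ Icc (0 : ℝ) 1, f x = true ↔ ∃ i ∈ K, x ∈ Icc (l i) (u i)) :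
    IsUnionOfIntervals K.card f := by
  refine ⟨fun j => l (K.equivFin.symm j), fun j => u (K.equivFin.symm j), fun x hx => ?_⟩
  rw [hf x hx]
  constructor
  · rintro ⟨i, hi, hxi⟩
    exact ⟨K.equivFin ⟨i, hi⟩, by simpa using hxi⟩
  · rintro ⟨j, hxj⟩
    exact ⟨_, (K.equivFin.symm j).2, hxj⟩

/-- Any union of at most `m` intervals is `(m−d)/m`-close to a union of at most
`d` intervals, whenever `1 ≤ d ≤ m`. -/
theorem unionOfIntervals_approx (m d : ℕ) (hd : 1 ≤ d) (hm : d ≤ m)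
    (g : ℝ → Bool) (hg : IsUnionOfIntervals m g) :
    ∃ h : ℝ → Bool, IsUnionOfIntervals d h ∧
      volume {x ∈ Set.Icc (0:ℝ) 1 | g x ≠ h x} ≤
        ENNReal.ofReal (((m : ℝ) - d) / m) := by
  obtain ⟨l, u, hg⟩ := hg
  set I : Fin m → Set ℝ := fun i => Icc (l i) (u i) ∩ Icc 0 1
  obtain ⟨K, rfl, hK⟩ := exists_card_eq_card_nsmul_measure_iUnion_diff_le volume (f := I)
    (fun i => measurableSet_Icc.inter measurableSet_Icc) (by simpa using hm)
  set h : ℝ → Bool := fun x => decide (∃ i ∈ K, x ∈ Icc (l i) (u i))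
  refine ⟨h, isUnionOfIntervals_of_finset l u K fun x _ => by simp [h], ?_⟩
  have herr : {x ∈ Icc (0 : ℝ) 1 | g x ≠ h x} ⊆ (⋃ i, I i) \ ⋃ i ∈ K, I i := by
    rintro x ⟨hx, hgh⟩
    rw [Ne, Bool.eq_iff_iff, hg x hx, decide_eq_true_iff] at hgh
    have hKall : (∃ i ∈ K, x ∈ Icc (l i) (u i)) → ∃ i, x ∈ Icc (l i) (u i) :=
      fun ⟨i, _, hi⟩ => ⟨i, hi⟩
    simp only [I, mem_sdiff, mem_iUnion, mem_inter_iff, and_iff_left hx, exists_prop]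
    tauto
  have hI : volume (⋃ i, I i) ≤ 1 :=
    (measure_mono (iUnion_subset fun i => inter_subset_right)).trans (by simp)
  have hm0 : (m : ℝ≥0∞) ≠ 0 := by exact_mod_cast (by omega : m ≠ 0)
  rw [Fintype.card_fin] at hK
  calc volume {x ∈ Icc (0 : ℝ) 1 | g x ≠ h x}
      ≤ volume ((⋃ i, I i) \ ⋃ i ∈ K, I i) := measure_mono herr
    _ ≤ ((m - K.card : ℕ) : ℝ≥0∞) / m := by
        rw [ENNReal.le_div_iff_mul_le (Or.inl hm0) (Or.inl (ENNReal.natCast_ne_top m)), mul_comm]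
        simpa [nsmul_eq_mul] using hK.trans (nsmul_le_nsmul_right hI _)
    _ = ENNReal.ofReal (((m : ℝ) - K.card) / m) := by
        rw [← Nat.cast_sub hm, ENNReal.ofReal_div_of_pos (Nat.cast_pos.2 (by omega)),
          ENNReal.ofReal_natCast, ENNReal.ofReal_natCast]
end

section
/- Let n ≥ 1, ε ∈ (0,1), and set τ = √(4n·log(4n/ε³)); assume τ ≤ √2·n. Let f : ℝⁿ → {−1,1} be measurable, let x, y be independent standard Gaussian vectors in ℝⁿ, and define g(x,y) = f(x)·f(y)·⟨x,y⟩ and its truncation g*(x,y) = g(x,y)·1[|⟨x,y⟩| ≤ τ]. Then |E[g] − E[g*]| ≤ ε³/2. -/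
open MeasureTheory ProbabilityTheory

/-- The standard Gaussian measure `N(0, Iₙ)` on `ℝⁿ`. -/
noncomputable def stdGaussian (n : ℕ) : Measure (Fin n → ℝ) :=
  Measure.pi fun _ => gaussianReal 0 1

/-!
Write `Z = ⟨x, y⟩`; since `|g| = |Z|`, the truncation error is at most `E[|Z|; |Z| > τ]`.
For `m τ ≥ 1` the tangent line of `t ↦ τ e^{m (t - τ)}` at `t = τ` lies above `t`, so
`|Z| ≤ τ e^{-m τ} (e^{m Z} + e^{-m Z})` on `|Z| > τ`. The pairs `(xᵢ, yᵢ)` are independent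
and `E[e^{m s t}] = E[e^{m² s² / 2}] = (1 - m²)^{-1/2}` for standard Gaussians `s, t`, so
`E[e^{± m Z}] = (1 - m²)^{-n/2}`. With `L = log (4n/ε³)` and `m = τ/(2n)` we get `m τ = 2L`
and `m² = L/n ≤ 1/2`; then `-log (1 - u) ≤ u + u²` for `u ≤ 1/2` gives
`(1 - m²)^{-n/2} ≤ e^{3L/4}`, and `τ ≤ √2 n ≤ n e^{L/4}` bounds the error by
`2n e^{-L} = ε³/2`.
-/

namespace TruncationError

open Real

theorem integral_exp_mul_sq_gaussianReal {c : ℝ} (hc : c < 1 / 2) :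
    ∫ x, exp (c * x ^ 2) ∂gaussianReal 0 1 = (√(1 - 2 * c))⁻¹ := by
  have hpdf (x : ℝ) : gaussianPDFReal 0 1 x • exp (c * x ^ 2)
      = (√(2 * π))⁻¹ * exp (-(1 / 2 - c) * x ^ 2) := by
    simp only [gaussianPDFReal, NNReal.coe_one, mul_one, sub_zero, smul_eq_mul, mul_assoc,
      ← exp_add]
    ring_nf
  simp_rw [integral_gaussianReal_eq_integral_smul one_ne_zero, hpdf, integral_const_mul,
    integral_gaussian]
  have h2c : 0 < 1 - 2 * c := by linarith
  rw [show π / (1 / 2 - c) = 2 * π / (1 - 2 * c) by field_simp, sqrt_div' _ h2c.le]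
  field_simp

theorem integrable_exp_mul_sq_gaussianReal {c : ℝ} (hc : c < 1 / 2) :
    Integrable (fun x ↦ exp (c * x ^ 2)) (gaussianReal 0 1) := by
  refine Integrable.of_integral_ne_zero ?_
  rw [integral_exp_mul_sq_gaussianReal hc]
  exact inv_ne_zero (sqrt_ne_zero'.2 (by linarith))

theorem integral_exp_mul_gaussianReal (t : ℝ) :
    ∫ x, exp (t * x) ∂gaussianReal 0 1 = exp (t ^ 2 / 2) := by
  rw [← mgf, mgf_fun_id_gaussianReal]
  simp

theorem integral_exp_mul_mul_gaussianReal (c s : ℝ) :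
    ∫ t, exp (c * s * t) ∂gaussianReal 0 1 = exp (c ^ 2 / 2 * s ^ 2) := by
  rw [integral_exp_mul_gaussianReal]
  ring_nf

theorem integrable_exp_mul_mul_gaussianReal_prod {c : ℝ} (hc : c ^ 2 < 1) :
    Integrable (fun p : ℝ × ℝ ↦ exp (c * p.1 * p.2))
      ((gaussianReal 0 1).prod (gaussianReal 0 1)) := by
  rw [integrable_prod_iff (by fun_prop)]
  refine ⟨ae_of_all _ fun s ↦ integrable_exp_mul_gaussianReal (c * s), ?_⟩
  simp only [norm_of_nonneg (exp_pos _).le, integral_exp_mul_mul_gaussianReal]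
  exact integrable_exp_mul_sq_gaussianReal (by linarith)

theorem integral_exp_mul_mul_gaussianReal_prod {c : ℝ} (hc : c ^ 2 < 1) :
    ∫ p : ℝ × ℝ, exp (c * p.1 * p.2) ∂(gaussianReal 0 1).prod (gaussianReal 0 1)
      = (√(1 - c ^ 2))⁻¹ := by
  rw [integral_prod _ (integrable_exp_mul_mul_gaussianReal_prod hc)]
  simp only [integral_exp_mul_mul_gaussianReal]
  rw [integral_exp_mul_sq_gaussianReal (by linarith)]
  ring_nf

theorem abs_le_mul_exp_neg_mul_mul_exp_add_exp {τ m z : ℝ} (hτ : 0 ≤ τ) (hmτ : 1 ≤ m * τ)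
    (hz : τ ≤ |z|) : |z| ≤ τ * exp (-(m * τ)) * (exp (m * z) + exp (-m * z)) := by
  have hcosh : exp (m * |z|) ≤ exp (m * z) + exp (-m * z) := by
    rcases abs_cases z with ⟨h, _⟩ | ⟨h, _⟩ <;> rw [h]
    · linarith [exp_pos (-m * z)]
    · rw [mul_neg, ← neg_mul]; linarith [exp_pos (m * z)]
  have htangent : τ * (m * (|z| - τ) + 1) ≤ τ * exp (m * (|z| - τ)) :=
    mul_le_mul_of_nonneg_left (add_one_le_exp _) hτ
  calc |z| ≤ τ * (m * (|z| - τ) + 1) := by nlinarith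
    _ ≤ τ * exp (-(m * τ)) * exp (m * |z|) := by
      rw [mul_assoc, ← exp_add]; convert htangent using 3; ring
    _ ≤ τ * exp (-(m * τ)) * (exp (m * z) + exp (-m * z)) := by gcongr

theorem abs_integral_sub_integral_truncation_le {α : Type*} [MeasurableSpace α] {μ : Measure α}
    [IsFiniteMeasure μ] {Z g : α → ℝ} {τ m : ℝ}
    (hZ : Measurable Z) (hg : AEStronglyMeasurable g μ) (hgZ : ∀ a, |g a| ≤ |Z a|)
    (hτ : 0 ≤ τ) (hmτ : 1 ≤ m * τ) (hpos : Integrable (fun a ↦ exp (m * Z a)) μ)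
    (hneg : Integrable (fun a ↦ exp (-m * Z a)) μ) :
    |∫ a, g a ∂μ - ∫ a, (if |Z a| ≤ τ then g a else 0) ∂μ|
      ≤ τ * exp (-(m * τ)) * (∫ a, exp (m * Z a) ∂μ + ∫ a, exp (-m * Z a) ∂μ) := by
  set B := fun a ↦ τ * exp (-(m * τ)) * (exp (m * Z a) + exp (-m * Z a))
  have hB : Integrable B μ := (hpos.add hneg).const_mul _
  have htail (a : α) : |g a - if |Z a| ≤ τ then g a else 0| ≤ B a := by
    split_ifs with h
    · rw [sub_self, abs_zero]; positivity
    · rw [sub_zero]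
      exact (hgZ a).trans (abs_le_mul_exp_neg_mul_mul_exp_add_exp hτ hmτ (not_le.1 h).le)
  have hg_int : Integrable g μ := by
    refine Integrable.mono' (hB.add (integrable_const τ)) hg (ae_of_all _ fun a ↦ ?_)
    have := htail a
    rw [Real.norm_eq_abs, Pi.add_apply]
    split_ifs at this with h
    · linarith [(hgZ a).trans h, (abs_nonneg _).trans this]
    · rw [sub_zero] at this; linarith
  have hs : MeasurableSet {a | |Z a| ≤ τ} := measurableSet_le hZ.abs measurable_const
  have htrunc_int : Integrable (fun a ↦ if |Z a| ≤ τ then g a else 0) μ :=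
    (hg_int.indicator hs).congr (ae_of_all _ fun a ↦ by simp [Set.indicator_apply])
  rw [← integral_sub hg_int htrunc_int, ← integral_add hpos hneg, ← integral_const_mul]
  exact norm_integral_le_of_norm_le hB
    (ae_of_all _ fun a ↦ (Real.norm_eq_abs _).trans_le (htail a))

section InnerProduct

variable {ι : Type*} [Fintype ι]

local notation "𝒩" => Measure.pi fun _ : ι ↦ gaussianReal 0 1

theorem exp_mul_sum_mul_eq_prod (c : ℝ) (w : ι → ℝ × ℝ) :
    exp (c * ∑ i, (w i).1 * (w i).2) = ∏ i, exp (c * (w i).1 * (w i).2) := by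
  rw [← exp_sum, Finset.mul_sum]
  simp only [mul_assoc]

theorem integrable_exp_mul_sum_mul_gaussian {c : ℝ} (hc : c ^ 2 < 1) :
    Integrable (fun p : (ι → ℝ) × (ι → ℝ) ↦ exp (c * ∑ i, p.1 i * p.2 i))
      (Measure.prod 𝒩 𝒩) := by
  rw [← (measurePreserving_arrowProdEquivProdArrow ℝ ℝ ι _ _).integrable_comp_emb
    (MeasurableEquiv.measurableEmbedding _)]
  simp only [Function.comp_def, MeasurableEquiv.arrowProdEquivProdArrow, MeasurableEquiv.coe_mk,
    Equiv.arrowProdEquivProdArrow, Equiv.coe_fn_mk, exp_mul_sum_mul_eq_prod]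
  exact Integrable.fintype_prod (f := fun _ (q : ℝ × ℝ) ↦ exp (c * q.1 * q.2))
    fun _ ↦ integrable_exp_mul_mul_gaussianReal_prod hc

theorem integral_exp_mul_sum_mul_gaussian {c : ℝ} (hc : c ^ 2 < 1) :
    ∫ p : (ι → ℝ) × (ι → ℝ), exp (c * ∑ i, p.1 i * p.2 i) ∂(Measure.prod 𝒩 𝒩)
      = (√(1 - c ^ 2))⁻¹ ^ Fintype.card ι := by
  rw [← (measurePreserving_arrowProdEquivProdArrow ℝ ℝ ι _ _).integral_comp']
  simp only [MeasurableEquiv.arrowProdEquivProdArrow, MeasurableEquiv.coe_mk,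
    Equiv.arrowProdEquivProdArrow, Equiv.coe_fn_mk, exp_mul_sum_mul_eq_prod]
  rw [integral_fintype_prod_eq_pow (fun q : ℝ × ℝ ↦ exp (c * q.1 * q.2)),
    integral_exp_mul_mul_gaussianReal_prod hc]

theorem abs_integral_sub_integral_truncation_inner_gaussian_le
    {g : (ι → ℝ) × (ι → ℝ) → ℝ} {τ m : ℝ} (hg : AEStronglyMeasurable g (Measure.prod 𝒩 𝒩))
    (hgZ : ∀ p, |g p| ≤ |∑ i, p.1 i * p.2 i|) (hτ : 0 ≤ τ) (hmτ : 1 ≤ m * τ) (hm : m ^ 2 < 1) :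
    |∫ p, g p ∂(Measure.prod 𝒩 𝒩)
        - ∫ p, (if |∑ i, p.1 i * p.2 i| ≤ τ then g p else 0) ∂(Measure.prod 𝒩 𝒩)|
      ≤ 2 * τ * exp (-(m * τ)) * (√(1 - m ^ 2))⁻¹ ^ Fintype.card ι := by
  have hm' : (-m) ^ 2 < 1 := by rwa [neg_sq]
  refine (abs_integral_sub_integral_truncation_le (by fun_prop) hg hgZ hτ hmτ
    (integrable_exp_mul_sum_mul_gaussian hm)
    (integrable_exp_mul_sum_mul_gaussian hm')).trans_eq ?_
  rw [integral_exp_mul_sum_mul_gaussian hm, integral_exp_mul_sum_mul_gaussian hm', neg_sq]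
  ring

end InnerProduct

theorem exp_neg_add_sq_le_one_sub {x : ℝ} (hx0 : 0 ≤ x) (hx : x ≤ 1 / 2) :
    exp (-(x + x ^ 2)) ≤ 1 - x := by
  have hq := quadratic_le_exp_of_nonneg (x := x + x ^ 2) (by positivity)
  rw [exp_neg, inv_le_iff_one_le_mul₀ (exp_pos _)]
  -- `(1 - x) (1 + y + y² / 2) = 1 + x² (1 - x - x² - x³) / 2` for `y = x + x²`
  have hcubic : 0 ≤ 1 - x - x ^ 2 - x ^ 3 := by nlinarith
  nlinarith [mul_nonneg (sq_nonneg x) hcubic]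

theorem inv_sqrt_one_sub_div_pow_le {n : ℕ} {L : ℝ} (hL0 : 0 ≤ L) (hLn : L ≤ n / 2) :
    (√(1 - L / n))⁻¹ ^ n ≤ exp (3 * L / 4) := by
  rcases n.eq_zero_or_pos with rfl | hn
  · simp only [pow_zero, one_le_exp_iff]; positivity
  set x := L / n with hx
  have hnx : n * x = L := by rw [hx]; field_simp
  have hx0 : 0 ≤ x := by positivity
  have hx2 : x ≤ 1 / 2 := by rw [hx, div_le_iff₀ (by positivity)]; linarith
  have hsqrt : exp (-(x + x ^ 2) / 2) ≤ √(1 - x) := by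
    rw [exp_half]
    exact sqrt_le_sqrt (exp_neg_add_sq_le_one_sub hx0 hx2)
  calc (√(1 - x))⁻¹ ^ n ≤ exp ((x + x ^ 2) / 2) ^ n := by
        gcongr
        exact (inv_anti₀ (exp_pos _) hsqrt).trans_eq (by rw [← exp_neg]; ring_nf)
    _ = exp ((L + L * x) / 2) := by rw [← exp_nat_mul, ← hnx]; ring_nf
    _ ≤ exp (3 * L / 4) := exp_le_exp.2 (by nlinarith)

theorem mul_exp_neg_two_mul_mul_inv_sqrt_pow_le {n : ℕ} {L τ : ℝ} (hL4 : log 4 ≤ L)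
    (hLn : L ≤ n / 2) (hτ : τ ≤ √2 * n) :
    2 * τ * exp (-(2 * L)) * (√(1 - L / n))⁻¹ ^ n ≤ 2 * n * exp (-L) := by
  have hL0 : 0 ≤ L := (log_nonneg (by norm_num)).trans hL4
  have hsqrt2 : √2 ≤ exp (L / 4) := by
    have hlog : log 4 / 4 = log 2 / 2 := by
      rw [show (4 : ℝ) = 2 ^ 2 by norm_num, log_pow]; push_cast; ring
    calc √2 = exp (log 4 / 4) := by rw [hlog, exp_half, exp_log two_pos]
      _ ≤ exp (L / 4) := by gcongr
  have hexp : exp (L / 4) * exp (-(2 * L)) * exp (3 * L / 4) = exp (-L) := by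
    rw [← exp_add, ← exp_add]; ring_nf
  calc 2 * τ * exp (-(2 * L)) * (√(1 - L / n))⁻¹ ^ n
      ≤ 2 * (exp (L / 4) * n) * exp (-(2 * L)) * exp (3 * L / 4) := by
        gcongr
        · exact hτ.trans (by gcongr)
        · exact inv_sqrt_one_sub_div_pow_le hL0 hLn
    _ = 2 * n * exp (-L) := by rw [← hexp]; ring

theorem log_four_le_log_four_mul_div_pow {n : ℕ} (hn : 1 ≤ n) {ε : ℝ} (hε0 : 0 < ε)
    (hε1 : ε < 1) : log 4 ≤ log (4 * n / ε ^ 3) := by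
  refine log_le_log (by norm_num) ((le_div_iff₀ (by positivity)).2 ?_)
  nlinarith [pow_lt_one₀ hε0.le hε1 (by norm_num : 3 ≠ 0), (by exact_mod_cast hn : (1 : ℝ) ≤ n)]

end TruncationError

open TruncationError Real in
/-- Truncating `g(x,y) = f(x)·f(y)·⟨x,y⟩` at `|⟨x,y⟩| ≤ τ`, with
`τ = √(4n·log(4n/ε³)) ≤ √2·n`, changes the expectation by at most `ε³/2`. -/
theorem truncation_error (n : ℕ) (hn : 1 ≤ n) (ε : ℝ) (hε : ε ∈ Set.Ioo (0:ℝ) 1)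
    (τ : ℝ) (hτ : τ = Real.sqrt (4 * n * Real.log (4 * n / ε ^ 3)))
    (hτ' : τ ≤ Real.sqrt 2 * n)
    (f : (Fin n → ℝ) → ℝ) (hf : Measurable f) (hf' : ∀ x, f x = -1 ∨ f x = 1) :
    |(∫ p : (Fin n → ℝ) × (Fin n → ℝ),
        f p.1 * f p.2 * (∑ i, p.1 i * p.2 i)
        ∂((stdGaussian n).prod (stdGaussian n))) -
      (∫ p : (Fin n → ℝ) × (Fin n → ℝ),
        (if |∑ i, p.1 i * p.2 i| ≤ τ then f p.1 * f p.2 * (∑ i, p.1 i * p.2 i) else 0)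
        ∂((stdGaussian n).prod (stdGaussian n)))| ≤ ε ^ 3 / 2 := by
  obtain ⟨hε0, hε1⟩ := hε
  have hn0 : (0 : ℝ) < n := by exact_mod_cast hn
  set L := log (4 * n / ε ^ 3)
  have hL4 : log 4 ≤ L := log_four_le_log_four_mul_div_pow hn hε0 hε1
  have hτ0 : 0 ≤ τ := hτ ▸ sqrt_nonneg _
  have hτ2 : τ ^ 2 = 4 * n * L := by
    rw [hτ, sq_sqrt (mul_nonneg (by positivity) ((log_nonneg (by norm_num)).trans hL4))]
  have hLn : L ≤ n / 2 := by
    have := pow_le_pow_left₀ hτ0 hτ' 2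
    rw [hτ2, mul_pow, sq_sqrt zero_le_two] at this
    nlinarith
  set m := τ / (2 * n) with hm
  have hmτ : m * τ = 2 * L := by rw [hm, div_mul_eq_mul_div, ← sq, hτ2]; field_simp; ring
  have hm2 : m ^ 2 = L / n := by rw [hm, div_pow, hτ2]; field_simp; ring
  have hfZ (p : (Fin n → ℝ) × (Fin n → ℝ)) :
      |f p.1 * f p.2 * ∑ i, p.1 i * p.2 i| ≤ |∑ i, p.1 i * p.2 i| := by
    rcases hf' p.1 with h1 | h1 <;> rcases hf' p.2 with h2 | h2 <;> simp [h1, h2]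
  calc _ ≤ 2 * τ * exp (-(m * τ)) * (√(1 - m ^ 2))⁻¹ ^ Fintype.card (Fin n) :=
        abs_integral_sub_integral_truncation_inner_gaussian_le (by fun_prop) hfZ hτ0
          (by linarith [one_sub_inv_le_log_of_pos (by norm_num : (0 : ℝ) < 4)])
          (by rw [hm2, div_lt_one hn0]; linarith)
    _ ≤ 2 * n * exp (-L) := by
        rw [hmτ, hm2, Fintype.card_fin]
        exact mul_exp_neg_two_mul_mul_inv_sqrt_pow_le hL4 hLn hτ'
    _ = ε ^ 3 / 2 := by
        rw [exp_neg, exp_log (by positivity)]; field_simp; norm_num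
end

section
/- Let x and y be independent standard normal random variables (each distributed as N(0,1)). Then for every real t with |t| < 1, the moment generating function of their product satisfies E[exp(t·x·y)] ≤ exp(t²/(2(1 − t²))). -/
/-!
Integrating out `y` first, the Gaussian moment generating function gives
`E[exp(t x y) | x] = exp(t² x² / 2)`, and a Gaussian integral gives
`E[exp(t² x² / 2)] = (1 - t²)^(-1/2)`. The bound is then `1 / (1 - s) ≤ exp(s / (1 - s))`,
i.e. `1 + u ≤ exp u` at `u = s / (1 - s)`, with `s = t²`, after taking square roots.
-/

open MeasureTheory ProbabilityTheory Real NNReal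

lemma integral_exp_mul_gaussianReal (μ : ℝ) (v : ℝ≥0) (c : ℝ) :
    ∫ x, rexp (c * x) ∂gaussianReal μ v = rexp (μ * c + v * c ^ 2 / 2) :=
  mgf_gaussianReal (X := id) (by simp) c

lemma integral_exp_mul_sq_gaussianReal {v : ℝ≥0} (hv : v ≠ 0) {a : ℝ} (ha : 2 * a * v < 1) :
    ∫ x, rexp (a * x ^ 2) ∂gaussianReal 0 v = (√(1 - 2 * a * v))⁻¹ := by
  have hv' : (0 : ℝ) < v := by positivity
  have hb : 0 < (1 - 2 * a * v) / (2 * v) := div_pos (by linarith) (by positivity)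
  have hdensity (x : ℝ) : gaussianPDFReal 0 v x * rexp (a * x ^ 2) =
      (√(2 * π * v))⁻¹ * rexp (-((1 - 2 * a * v) / (2 * v)) * x ^ 2) := by
    rw [gaussianPDFReal, mul_assoc, ← Real.exp_add]
    congr 2
    field_simp
    ring
  simp_rw [integral_gaussianReal_eq_integral_smul hv, smul_eq_mul, hdensity, integral_const_mul,
    integral_gaussian, ← Real.sqrt_inv]
  rw [← Real.sqrt_mul (by positivity)]
  congr 1
  field_simp

lemma inv_sqrt_one_sub_le_exp {s : ℝ} (hs : s < 1) :
    (√(1 - s))⁻¹ ≤ rexp (s / (2 * (1 - s))) := by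
  have hs' : 0 < 1 - s := by linarith
  have key : 1 / (1 - s) ≤ rexp (s / (1 - s)) := by
    have : s / (1 - s) + 1 = 1 / (1 - s) := by field_simp; ring
    linarith [add_one_le_exp (s / (1 - s))]
  rw [← Real.sqrt_inv, div_mul_eq_div_div_swap, exp_half, inv_eq_one_div]
  exact Real.sqrt_le_sqrt key

/-- For independent standard normal random variables `x, y` and `|t| < 1`,
`E[exp(t·x·y)] ≤ exp(t²/(2(1 − t²)))`. -/
theorem mgf_product_of_gaussians (t : ℝ) (ht : |t| < 1) :
    (∫ p : ℝ × ℝ, Real.exp (t * p.1 * p.2)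
        ∂((gaussianReal 0 1).prod (gaussianReal 0 1))) ≤
      Real.exp (t ^ 2 / (2 * (1 - t ^ 2))) := by
  have ht2 : t ^ 2 < 1 := (sq_lt_one_iff_abs_lt_one t).2 ht
  have hsq : 2 * (t ^ 2 / 2) * ((1 : ℝ≥0) : ℝ) < 1 := by rw [NNReal.coe_one]; linarith
  have inner (x : ℝ) : ∫ y, rexp (t * x * y) ∂gaussianReal 0 1 = rexp (t ^ 2 / 2 * x ^ 2) := by
    rw [integral_exp_mul_gaussianReal]; congr 1; push_cast; ring
  have outer : ∫ x, rexp (t ^ 2 / 2 * x ^ 2) ∂gaussianReal 0 1 = (√(1 - t ^ 2))⁻¹ := by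
    rw [integral_exp_mul_sq_gaussianReal one_ne_zero hsq]; congr 2; push_cast; ring
  have hint : Integrable (fun p : ℝ × ℝ => rexp (t * p.1 * p.2))
      ((gaussianReal 0 1).prod (gaussianReal 0 1)) := by
    refine (integrable_prod_iff (by fun_prop)).2 ⟨ae_of_all _ fun x => ?_, ?_⟩
    · exact integrable_exp_mul_gaussianReal (t * x)
    · simp only [Real.norm_eq_abs, abs_of_pos (exp_pos _), inner]
      exact Integrable.of_integral_ne_zero (by rw [outer]; positivity)
  rw [integral_prod _ hint]
  simp_rw [inner, outer]
  exact inv_sqrt_one_sub_le_exp ht2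
end

section
/- For every constant c > 0 there exists n₀ such that for all n ≥ n₀ the following holds. Let q = ⌊(1/2)·log₂ n⌋ and let U be a set of ⌈n^c⌉ points drawn independently and uniformly at random from {0,1}ⁿ. Then with probability at least 3/4, for every subset S ⊆ U of size q and every y ∈ {0,1}^q, the fraction of coordinates i ∈ [n] such that the column of S indexed by i equals y is at most (6/5)·2^{−q}. -/
/-!
Union bound over the at most `m^q 2^q` pairs `(S, y)`, where `m = ⌈n^c⌉`. For a fixed pair the
`n` columns of `S` are independent and uniform in `{0,1}^q`, so a fixed set of `r` coordinates
consists of columns equal to `y` with probability `2^{-qr}`. Counting `r`-subsets of the set of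
matching coordinates (a factorial-moment Markov bound), more than `(6/5) n 2^{-q}` matches occur
with probability at most `C(n,r) 2^{-qr} / C(k,r) ≤ (20/23)^r`, where `k` is the threshold and
`r = ⌊n / (20·2^q)⌋ ≥ √n/20 - 1`. Since `m^q 2^q = exp(O(log² n))`, the union bound is eventually
below `1/4`.
-/

open Finset Function Real Filter

theorem card_filter_le_card_mul_choose_le {α ι : Type*} [Fintype ι] [DecidableEq ι]
    (s : Finset α) (f : α → Finset ι) {k r : ℕ} {B : ℝ}
    (hB : ∀ R : Finset ι, #R = r → (#{a ∈ s | R ⊆ f a} : ℝ) ≤ B) :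
    (#{a ∈ s | k ≤ #(f a)} : ℝ) * k.choose r ≤ (Fintype.card ι).choose r * B := by
  have hdouble := card_nsmul_le_card_nsmul (R := ℝ) (fun a (R : Finset ι) => R ⊆ f a)
    (s := {a ∈ s | k ≤ #(f a)}) (t := powersetCard r univ) (m := k.choose r) (n := B)
    (fun a ha => by
      have hsubsets : bipartiteAbove (fun a R => R ⊆ f a) (powersetCard r univ) a =
          powersetCard r (f a) := by
        ext R; simp [mem_powersetCard, and_comm]
      rw [hsubsets, card_powersetCard]
      exact_mod_cast Nat.choose_le_choose r (mem_filter.mp ha).2)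
    (fun R hR => (Nat.cast_le.mpr (card_le_card (filter_subset_filter _ (filter_subset _ s)))).trans
      (hB R (mem_powersetCard.mp hR).2))
  simpa [nsmul_eq_mul] using hdouble

theorem card_filter_forall_apply_eq_mul_pow {τ κ β : Type*} [Fintype τ] [Fintype κ] [Fintype β]
    [DecidableEq κ] [DecidableEq β] {e : τ → κ} (he : Injective e) (w : τ → β) :
    #{u : κ → β | ∀ t, u (e t) = w t} * Fintype.card β ^ Fintype.card τ =
      Fintype.card β ^ Fintype.card κ := by
  have hpi : ({u : κ → β | ∀ t, u (e t) = w t} : Finset (κ → β)) =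
      Fintype.piFinset fun x => {b | ∀ t, e t = x → b = w t} := by
    ext u
    simpa using ⟨fun h x t ht => ht ▸ h t, fun h t => h _ t rfl⟩
  have hfiber : ∀ x, #{b : β | ∀ t, e t = x → b = w t} *
      (if x ∈ univ.image e then Fintype.card β else 1) = Fintype.card β := by
    intro x
    split_ifs with hx
    · obtain ⟨t, -, rfl⟩ := mem_image.mp hx
      have hsingle : ({b : β | ∀ t', e t' = e t → b = w t'} : Finset β) = {w t} := by
        ext b
        simp only [mem_filter, mem_univ, true_and, mem_singleton]
        exact ⟨fun h => h t rfl, fun h t' ht' => he ht' ▸ h⟩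
      simp [hsingle]
    · have hfree : ({b : β | ∀ t, e t = x → b = w t} : Finset β) = univ := by
        ext b
        simp only [mem_image, mem_univ, true_and, not_exists] at hx
        simp [hx]
      simp [hfree]
  rw [hpi, Fintype.card_piFinset, ← card_univ (α := τ), ← card_image_of_injective _ he,
    ← prod_const, ← univ_inter (image e univ), ← prod_ite_mem, ← prod_mul_distrib]
  simp only [hfiber, prod_const, card_univ]

def matchingColumns {ρ ι β : Type*} [Fintype ι] [DecidableEq β] {q : ℕ}
    (u : ρ → ι → β) (s : Fin q → ρ) (y : Fin q → β) : Finset ι :=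
  {i | ∀ j, u (s j) i = y j}

section matchingColumns

variable {ρ ι β : Type*} [Fintype ρ] [Fintype ι] [Fintype β] [DecidableEq ρ] [DecidableEq ι]
  [DecidableEq β]
  {q : ℕ} {s : Fin q → ρ}

theorem card_subset_matchingColumns_mul_pow (hs : Injective s) (y : Fin q → β) (R : Finset ι) :
    #{u : ρ → ι → β | R ⊆ matchingColumns u s y} * Fintype.card β ^ (q * #R) =
      Fintype.card (ρ → ι → β) := by
  have hprescribed := card_filter_forall_apply_eq_mul_pow (τ := Fin q × R)
    (e := fun t => (s t.1, (t.2 : ι))) (fun t t' h => by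
      simp only [Prod.mk.injEq] at h
      exact Prod.ext (hs h.1) (Subtype.ext h.2)) (fun t => y t.1)
  rw [Fintype.card_prod, Fintype.card_fin, Fintype.card_coe, ← Fintype.card_fun,
    Fintype.card_congr (Equiv.curry ρ ι β)] at hprescribed
  rw [← hprescribed, card_equiv (Equiv.curry ρ ι β).symm]
  intro u
  simp [matchingColumns, subset_iff, forall_comm (α := Fin q)]

theorem card_le_matchingColumns_mul_choose_le [Nonempty β] (hs : Injective s) (y : Fin q → β)
    (k r : ℕ) :
    (#{u : ρ → ι → β | k ≤ #(matchingColumns u s y)} : ℝ) * k.choose r ≤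
      (Fintype.card ι).choose r * (Fintype.card (ρ → ι → β) / Fintype.card β ^ (q * r)) := by
  refine card_filter_le_card_mul_choose_le _ _ fun R hR => ?_
  rw [le_div_iff₀ (by positivity), ← hR]
  exact_mod_cast (card_subset_matchingColumns_mul_pow hs y R).le

end matchingColumns

theorem Nat.choose_le_pow_mul_choose {a : ℝ} (ha : 0 ≤ a) {n k r : ℕ}
    (h : (n : ℝ) ≤ a * (k + 1 - r : ℕ)) : (n.choose r : ℝ) ≤ a ^ r * k.choose r :=
  calc (n.choose r : ℝ) ≤ n ^ r / r.factorial := Nat.choose_le_pow_div r n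
    _ ≤ (a * (k + 1 - r : ℕ)) ^ r / r.factorial := by gcongr
    _ = a ^ r * ((k + 1 - r : ℕ) ^ r / r.factorial) := by rw [mul_pow, mul_div_assoc]
    _ ≤ a ^ r * k.choose r := by gcongr; exact_mod_cast Nat.pow_le_choose r k

theorem card_many_matchingColumns_le {ρ : Type*} [Fintype ρ] [DecidableEq ρ] {n q : ℕ}
    {s : Fin q → ρ} (hs : Injective s) (y : Fin q → Bool) :
    (#{u : ρ → Fin n → Bool | 6 * n / (5 * 2 ^ q) < #(matchingColumns u s y)} : ℝ) ≤
      (20 / 23) ^ (n / (20 * 2 ^ q)) * Fintype.card (ρ → Fin n → Bool) := by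
  set Q := 2 ^ q
  set k := 6 * n / (5 * Q) + 1
  set r := n / (20 * Q)
  set N := (Fintype.card (ρ → Fin n → Bool) : ℝ)
  have hQ : 0 < Q := by positivity
  have hrk : r ≤ k := by
    have h20 : n / (20 * Q) ≤ n / (5 * Q) := Nat.div_le_div_left (by omega) (by omega)
    have h6 : n / (5 * Q) ≤ 6 * n / (5 * Q) := Nat.div_le_div_right (by omega)
    omega
  -- `Q k > 6n/5` and `Q r ≤ n/20`, so `Q (k + 1 - r) > 23n/20`: the source of the ratio `20/23`.
  have hratio : 23 * n ≤ 20 * Q * (k + 1 - r) := by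
    have hk : 6 * n < 5 * Q * k := Nat.lt_mul_div_succ (6 * n) (by omega)
    have hr : r * (20 * Q) ≤ n := Nat.div_mul_le_self n (20 * Q)
    zify [hrk.trans (Nat.le_succ _)] at hk hr ⊢
    linarith
  have hmoment := card_le_matchingColumns_mul_choose_le (ι := Fin n) hs y k r
  rw [Fintype.card_fin, Fintype.card_bool] at hmoment
  have hchoose : (n.choose r : ℝ) ≤ (20 / 23 * Q) ^ r * k.choose r := by
    refine Nat.choose_le_pow_mul_choose (by positivity) ?_
    have := (Nat.cast_le (α := ℝ)).mpr hratio
    push_cast at this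
    linarith
  have hpos : (0 : ℝ) < k.choose r := by exact_mod_cast Nat.choose_pos hrk
  refine le_of_mul_le_mul_right ?_ hpos
  calc _ ≤ (n.choose r : ℝ) * (N / 2 ^ (q * r)) := hmoment
    _ ≤ (20 / 23 * Q) ^ r * k.choose r * (N / 2 ^ (q * r)) := by gcongr
    _ = (20 / 23) ^ r * N * k.choose r := by
      rw [mul_pow, pow_mul]; push_cast [Q]; field_simp

theorem card_unbalanced_le {m n q : ℕ} :
    (#{u : Fin m → Fin n → Bool | ∃ s : Fin q → Fin m, Injective s ∧ ∃ y : Fin q → Bool,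
        (6 : ℝ) / 5 / 2 ^ q < #(matchingColumns u s y) / n} : ℝ) ≤
      m ^ q * 2 ^ q * (20 / 23) ^ (n / (20 * 2 ^ q)) * Fintype.card (Fin m → Fin n → Bool) := by
  set pairs : Finset ((Fin q → Fin m) × (Fin q → Bool)) :=
    ({s | Injective s} : Finset (Fin q → Fin m)) ×ˢ univ
  have hcover : ({u : Fin m → Fin n → Bool | ∃ s : Fin q → Fin m, Injective s ∧
      ∃ y : Fin q → Bool, (6 : ℝ) / 5 / 2 ^ q < #(matchingColumns u s y) / n} : Finset _) ⊆
      pairs.biUnion fun p => {u : Fin m → Fin n → Bool |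
        6 * n / (5 * 2 ^ q) < #(matchingColumns u p.1 p.2)} := by
    intro u hu
    obtain ⟨s, hs, y, hy⟩ := (mem_filter.mp hu).2
    refine mem_biUnion.mpr ⟨(s, y), by simpa [pairs] using hs, mem_filter.mpr ⟨mem_univ _, ?_⟩⟩
    rcases Nat.eq_zero_or_pos n with rfl | hn
    · simp only [CharP.cast_eq_zero, div_zero] at hy
      exact absurd hy (not_lt.mpr (by positivity))
    rw [div_lt_div_iff₀ (by positivity) (by positivity)] at hy
    rw [Nat.div_lt_iff_lt_mul (by positivity)]
    exact_mod_cast (by linarith : (6 * n : ℝ) < #(matchingColumns u s y) * (5 * 2 ^ q))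
  have hpairs : #pairs ≤ m ^ q * 2 ^ q := by
    simpa [pairs] using card_le_card (filter_subset (fun s : Fin q → Fin m => Injective s) univ)
  calc _ ≤ (#(pairs.biUnion _) : ℝ) := by exact_mod_cast card_le_card hcover
    _ ≤ ∑ p ∈ pairs, (#{u : Fin m → Fin n → Bool |
          6 * n / (5 * 2 ^ q) < #(matchingColumns u p.1 p.2)} : ℝ) := by
      exact_mod_cast card_biUnion_le
    _ ≤ #pairs • ((20 / 23) ^ (n / (20 * 2 ^ q)) * Fintype.card (Fin m → Fin n → Bool)) :=
      sum_le_card_nsmul _ _ _ fun p hp =>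
        card_many_matchingColumns_le (by simpa [pairs] using hp) p.2
    _ ≤ _ := by rw [nsmul_eq_mul, mul_assoc _ (_ ^ _)]; gcongr; exact_mod_cast hpairs

theorem floor_half_logb_le {x : ℝ} (hx : 1 ≤ x) :
    (⌊(1 / 2 : ℝ) * logb 2 x⌋₊ : ℝ) ≤ 1 / 2 * logb 2 x :=
  Nat.floor_le (by have := logb_nonneg one_lt_two hx; positivity)

theorem two_pow_floor_half_logb_le_sqrt {x : ℝ} (hx : 1 ≤ x) :
    (2 : ℝ) ^ ⌊(1 / 2 : ℝ) * logb 2 x⌋₊ ≤ √x := by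
  rw [le_sqrt (by positivity) (by linarith), ← pow_mul, ← rpow_natCast,
    ← le_logb_iff_rpow_le one_lt_two (by linarith)]
  push_cast
  linarith [floor_half_logb_le hx]

theorem ceil_rpow_pow_mul_two_pow_le {c x : ℝ} (hc : 0 ≤ c) (hx : exp 1 ≤ x) :
    (⌈x ^ c⌉₊ : ℝ) ^ ⌊(1 / 2 : ℝ) * logb 2 x⌋₊ * 2 ^ ⌊(1 / 2 : ℝ) * logb 2 x⌋₊ ≤
      exp ((1 + c / (2 * log 2)) * log x ^ 2) := by
  set q := ⌊(1 / 2 : ℝ) * logb 2 x⌋₊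
  set L := log x
  have hx1 : 1 ≤ x := le_trans (one_le_exp zero_le_one) hx
  have hL : 1 ≤ L := (le_log_iff_exp_le (by linarith)).mpr hx
  have hlog2 : 0 < log 2 := log_pos one_lt_two
  have hceil : (⌈x ^ c⌉₊ : ℝ) ≤ 2 * x ^ c := by
    linarith [Nat.ceil_lt_add_one (rpow_nonneg (by linarith : (0 : ℝ) ≤ x) c),
      one_le_rpow hx1 hc]
  have hlog : log (4 * x ^ c) = 2 * log 2 + c * L := by
    rw [log_mul (by norm_num) (by positivity), log_rpow (by linarith),
      show (4 : ℝ) = 2 ^ 2 by norm_num, log_pow]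
    push_cast
    ring
  have hq : (q : ℝ) ≤ L / (2 * log 2) :=
    (floor_half_logb_le hx1).trans_eq (by rw [logb]; ring)
  have hexponent : q * (2 * log 2 + c * L) ≤ (1 + c / (2 * log 2)) * L ^ 2 :=
    calc q * (2 * log 2 + c * L) ≤ L / (2 * log 2) * (2 * log 2 + c * L) := by gcongr
      _ = L + c / (2 * log 2) * L ^ 2 := by field_simp
      _ ≤ (1 + c / (2 * log 2)) * L ^ 2 := by nlinarith
  calc (⌈x ^ c⌉₊ : ℝ) ^ q * 2 ^ q = (2 * ⌈x ^ c⌉₊) ^ q := by ring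
    _ ≤ (4 * x ^ c) ^ q := pow_le_pow_left₀ (by positivity) (by linarith) q
    _ = exp (q * log (4 * x ^ c)) := by rw [exp_nat_mul, exp_log (by positivity)]
    _ ≤ _ := by rw [hlog]; exact exp_le_exp.mpr hexponent

theorem pow_div_twenty_mul_two_pow_le {n : ℕ} (hn : 1 ≤ n) :
    (20 / 23 : ℝ) ^ (n / (20 * 2 ^ ⌊(1 / 2 : ℝ) * logb 2 n⌋₊)) ≤
      exp (log (23 / 20) - log (23 / 20) / 20 * √n) := by
  set q := ⌊(1 / 2 : ℝ) * logb 2 n⌋₊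
  set r := n / (20 * 2 ^ q)
  have hsqrt : (2 : ℝ) ^ q ≤ √n := two_pow_floor_half_logb_le_sqrt (by exact_mod_cast hn)
  have hsqrt_pos : 0 < √(n : ℝ) := sqrt_pos.mpr (by positivity)
  have hr : √(n : ℝ) ≤ 20 * (r + 1) := by
    have hlt : (n : ℝ) < 20 * 2 ^ q * (r + 1) := by
      exact_mod_cast Nat.lt_mul_div_succ n (by positivity : 0 < 20 * 2 ^ q)
    have : √(n : ℝ) * √n ≤ 20 * (r + 1) * √n := by
      rw [mul_self_sqrt (by positivity)]
      nlinarith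
    exact le_of_mul_le_mul_right this hsqrt_pos
  have hlog : log (20 / 23 : ℝ) = -log (23 / 20) := by
    rw [← log_inv]; norm_num
  rw [← exp_log (by norm_num : (0 : ℝ) < 20 / 23), ← exp_nat_mul, hlog]
  apply exp_le_exp.mpr
  nlinarith [log_pos (by norm_num : (1 : ℝ) < 23 / 20)]

theorem eventually_union_bound_le_quarter {c : ℝ} (hc : 0 < c) :
    ∀ᶠ n : ℕ in atTop,
      (⌈(n : ℝ) ^ c⌉₊ : ℝ) ^ ⌊(1 / 2 : ℝ) * logb 2 n⌋₊ * 2 ^ ⌊(1 / 2 : ℝ) * logb 2 n⌋₊ *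
        (20 / 23 : ℝ) ^ (n / (20 * 2 ^ ⌊(1 / 2 : ℝ) * logb 2 n⌋₊)) ≤ 1 / 4 := by
  set a := 1 + c / (2 * log 2)
  set t := log (23 / 20 : ℝ)
  have ht : 0 < t := log_pos (by norm_num)
  have hpolylog : ∀ᶠ x : ℝ in atTop, a * log x ^ 2 ≤ t / 40 * √x := by
    filter_upwards [((isLittleO_log_rpow_rpow_atTop 2 one_half_pos).const_mul_left a).bound
      (by positivity : 0 < t / 40), eventually_ge_atTop 1] with x hx hx1
    rwa [rpow_two, ← sqrt_eq_rpow, norm_of_nonneg (by positivity),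
      norm_of_nonneg (by positivity)] at hx
  have hconst : ∀ᶠ x : ℝ in atTop, t + log 4 ≤ t / 40 * √x :=
    (tendsto_sqrt_atTop.const_mul_atTop (by positivity)).eventually_ge_atTop _
  filter_upwards [tendsto_natCast_atTop_atTop.eventually
    (hpolylog.and (hconst.and (eventually_ge_atTop (exp 1))))] with n ⟨h1, h2, h3⟩
  have hn : 1 ≤ n := by exact_mod_cast (one_le_exp zero_le_one).trans h3
  calc _ ≤ exp (a * log n ^ 2) * exp (t - t / 20 * √n) :=
        mul_le_mul (ceil_rpow_pow_mul_two_pow_le hc.le h3) (pow_div_twenty_mul_two_pow_le hn)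
          (by positivity) (by positivity)
    _ ≤ exp (-log 4) := by rw [← exp_add]; exact exp_le_exp.mpr (by linarith)
    _ = 1 / 4 := by rw [exp_neg, exp_log (by norm_num)]; norm_num

theorem one_sub_le_card_filter_div {α : Type*} [Fintype α] [Nonempty α] (p : α → Prop)
    [DecidablePred p] {ε : ℝ} (h : (#{a | ¬p a} : ℝ) ≤ ε * Fintype.card α) :
    1 - ε ≤ #{a | p a} / Fintype.card α := by
  have hsplit := card_filter_add_card_filter_not (s := univ) p
  rw [card_univ] at hsplit
  have hpos : (0 : ℝ) < Fintype.card α := by exact_mod_cast Fintype.card_pos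
  rw [le_div_iff₀ hpos]
  rw [← hsplit] at h ⊢
  push_cast at h ⊢
  linarith

/-- For every `c > 0` and all large enough `n`, with `q = ⌊(1/2)·log₂ n⌋` and
`U` a tuple of `⌈n^c⌉` points drawn independently and uniformly from `{0,1}ⁿ`
(modeled by the uniform counting measure on `Fin m → Fin n → Bool`), with
probability at least `3/4`: for every subset `S ⊆ U` of size `q` (a `q`-tuple of
distinct points of `U`) and every `y ∈ {0,1}^q`, the fraction of coordinates
`i ∈ [n]` whose column in `S` equals `y` is at most `(6/5)·2^{−q}`. -/
theorem dictator_column_balance (c : ℝ) (hc : 0 < c) :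
    ∃ n₀ : ℕ, ∀ n : ℕ, n₀ ≤ n →
      (3 : ℝ) / 4 ≤
        (((Finset.univ.filter
            (fun u : Fin (⌈(n : ℝ) ^ c⌉₊) → Fin n → Bool =>
              ∀ s : Fin (⌊(1 / 2 : ℝ) * Real.logb 2 n⌋₊) → Fin (⌈(n : ℝ) ^ c⌉₊),
                Function.Injective s →
                  ∀ y : Fin (⌊(1 / 2 : ℝ) * Real.logb 2 n⌋₊) → Bool,
                    ((Finset.univ.filter
                        (fun i : Fin n => ∀ j, u (s j) i = y j)).card : ℝ) / n ≤
                      (6 : ℝ) / 5 / 2 ^ (⌊(1 / 2 : ℝ) * Real.logb 2 n⌋₊))).card : ℝ) /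
          (Fintype.card (Fin (⌈(n : ℝ) ^ c⌉₊) → Fin n → Bool) : ℝ)) := by
  obtain ⟨n₀, hn₀⟩ := eventually_atTop.mp (eventually_union_bound_le_quarter hc)
  refine ⟨n₀, fun n hn => ?_⟩
  have hN : (0 : ℝ) ≤ Fintype.card (Fin ⌈(n : ℝ) ^ c⌉₊ → Fin n → Bool) := by positivity
  have hbad := card_unbalanced_le.trans (mul_le_mul_of_nonneg_right (hn₀ n hn) hN)
  refine (by norm_num : (3 : ℝ) / 4 = 1 - 1 / 4).trans_le (one_sub_le_card_filter_div _ ?_)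
  refine le_of_eq_of_le (congrArg _ (congrArg _ (filter_congr fun u _ => ?_))) hbad
  push Not
  rfl
end
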